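/- Every Rauzy class of irreducible permutations of {1,…,d} contains a standard permutation, i.e. a permutation π with π(1) = d and π(d) = 1. -/

import Mathlib

/-- `σ` is obtained from `π` by the bottom Rauzy move (0-indexed). -/
def RauzyBottomRel (d : ℕ) (π σ : Equiv.Perm (Fin d)) : Prop :=
  ∀ h : 0 < d, ∀ j : Fin d, (σ j).val =
    if (π j).val ≤ (π ⟨d - 1, by omega⟩).val then (π j).val
    else if (π j).val < d - 1 then (π j).val + 1
    else (π ⟨d - 1, by omega⟩).val + 1

/-- `σ` is obtained from `π` by the top Rauzy move (0-indexed). -/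
def RauzyTopRel (d : ℕ) (π σ : Equiv.Perm (Fin d)) : Prop :=
  ∀ h : 0 < d, ∀ j : Fin d,
    (j.val ≤ (π.symm ⟨d - 1, by omega⟩).val → σ j = π j) ∧
    (j.val = (π.symm ⟨d - 1, by omega⟩).val + 1 → σ j = π ⟨d - 1, by omega⟩) ∧
    ((π.symm ⟨d - 1, by omega⟩).val + 1 < j.val →
      σ j = π ⟨j.val - 1, lt_of_le_of_lt (Nat.sub_le _ _) j.isLt⟩)

/-!
Positions and values live in `Fin (n + 1)`, so `d = n + 1` and a standard permutation has
`σ 0 = n` and `σ n = 0`.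

Inversion exchanges the two Rauzy moves and preserves irreducibility. Top moves rotate the
entries to the right of the position of the largest value `n` and fix the others; dually, bottom
moves rotate the values above the last value and fix the smaller ones.

Let `σ` minimise the last value `c = σ n` over its Rauzy class and suppose `c > 0`. Rotating an
entry to the last position by top moves shows that, throughout the class, every entry to the
right of `n` is `≥ c`; hence the values `< c` never move and always stand left of `n`. Raising any
value `> c` to `n` by bottom moves then shows that every value `< c` stands left of every value
`≥ c`, so `σ` maps `{0, …, c - 1}` to itself, contradicting irreducibility. So the class contains
some `τ` with `τ n = 0`, and bottom moves raise `τ 0` to `n` without changing `τ n`.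
-/

open Equiv Function Set

namespace Rauzy

section Irreducible

variable {m : ℕ}

def IsIrreducible (σ : Perm (Fin m)) : Prop :=
  ∀ k, 1 ≤ k → k < m → ¬ MapsTo σ {i | i.val < k} {i | i.val < k}

lemma IsIrreducible.inv {σ : Perm (Fin m)} (h : IsIrreducible σ) : IsIrreducible σ.symm :=
  fun k hk hkm hσ => h k hk hkm (Perm.perm_symm_mapsTo_iff_mapsTo.mp hσ)

lemma le_of_injective_of_mapsTo {m' k l : ℕ} {f : Fin m → Fin m'} (hf : Injective f)
    (hk : k ≤ m) (h : MapsTo f {i | i.val < k} {i | i.val < l}) : k ≤ l := by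
  simpa using Fintype.card_le_of_injective
    (fun i : Fin k => (⟨f ⟨i, by omega⟩, h (show i.val < k from i.isLt)⟩ : Fin l))
    fun i j hij => by simpa [Fin.ext_iff] using hf (Fin.ext (by simpa using hij))

lemma mapsTo_setOf_lt_of_forall_lt {σ : Perm (Fin m)} {k : ℕ}
    (h : ∀ s t, (σ s).val < k → k ≤ (σ t).val → s < t) :
    MapsTo σ {i | i.val < k} {i | i.val < k} := by
  intro i (hi : i.val < k)
  by_contra! hik
  have hk : k ≤ (σ i).val := not_lt.mp hik
  have hleft : MapsTo σ.symm {v | v.val < k} {s | s.val < i.val} := fun v hv =>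
    h _ i (by simpa using hv) hk
  have := le_of_injective_of_mapsTo σ.symm.injective (by omega) hleft
  omega

end Irreducible

variable {n : ℕ}

/-- The cycle `c + 1 ↦ c + 2 ↦ ⋯ ↦ n ↦ c + 1`. -/
noncomputable def cycleAbove (c : Fin (n + 1)) : Perm (Fin (n + 1)) :=
  Equiv.ofBijective
    (fun x => ⟨if x.val ≤ c.val then x.val else if x.val < n then x.val + 1 else c.val + 1,
      by split_ifs <;> omega⟩)
    (Finite.injective_iff_bijective.mp fun x y h => by
      simp only [Fin.mk.injEq] at h
      ext; split_ifs at h <;> omega)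

lemma val_cycleAbove_apply (c x : Fin (n + 1)) : (cycleAbove c x).val =
    if x.val ≤ c.val then x.val else if x.val < n then x.val + 1 else c.val + 1 :=
  rfl

noncomputable def bottom (π : Perm (Fin (n + 1))) : Perm (Fin (n + 1)) :=
  π.trans (cycleAbove (π (Fin.last n)))

noncomputable def top (π : Perm (Fin (n + 1))) : Perm (Fin (n + 1)) :=
  (cycleAbove (π.symm (Fin.last n))).symm.trans π

lemma top_symm (π : Perm (Fin (n + 1))) : top π.symm = (bottom π).symm := rfl

lemma bottom_symm (π : Perm (Fin (n + 1))) : bottom π.symm = (top π).symm := rfl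

lemma rauzyBottomRel_bottom (π : Perm (Fin (n + 1))) : RauzyBottomRel (n + 1) π (bottom π) :=
  fun _ _ => rfl

lemma rauzyTopRel_top (π : Perm (Fin (n + 1))) : RauzyTopRel (n + 1) π (top π) := by
  intro _ j
  have hp : (π.symm ⟨n + 1 - 1, by omega⟩).val = (π.symm (Fin.last n)).val := rfl
  have hj := j.isLt
  refine ⟨fun h => ?_, fun h => ?_, fun h => ?_⟩ <;>
  · simp only [top, trans_apply]
    congr 1
    rw [symm_apply_eq]
    ext
    simp only [val_cycleAbove_apply]
    split_ifs <;> omega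

lemma bottom_apply_of_le {π : Perm (Fin (n + 1))} {j : Fin (n + 1)} (h : π j ≤ π (Fin.last n)) :
    bottom π j = π j := by
  ext; simp [bottom, val_cycleAbove_apply, Fin.le_def.mp h]

lemma top_apply_of_le {π : Perm (Fin (n + 1))} {j : Fin (n + 1)} (h : j ≤ π.symm (Fin.last n)) :
    top π j = π j := by
  refine congrArg π ((symm_apply_eq _).mpr ?_)
  ext; simp [val_cycleAbove_apply, Fin.le_def.mp h]

lemma top_apply_succ {π : Perm (Fin (n + 1))} {i : Fin n} (h : π.symm (Fin.last n) < i.castSucc) :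
    top π i.succ = π i.castSucc := by
  refine congrArg π ((symm_apply_eq _).mpr ?_)
  ext
  rw [Fin.lt_def, Fin.val_castSucc] at h
  simp only [val_cycleAbove_apply, Fin.val_castSucc, Fin.val_succ]
  have := i.isLt
  split_ifs <;> omega

lemma top_symm_apply_last (π : Perm (Fin (n + 1))) :
    (top π).symm (Fin.last n) = π.symm (Fin.last n) := by
  rw [symm_apply_eq, top_apply_of_le le_rfl, apply_symm_apply]

def Reachable : Perm (Fin (n + 1)) → Perm (Fin (n + 1)) → Prop :=
  Relation.ReflTransGen fun π σ => σ = bottom π ∨ σ = top π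

lemma Reachable.trans {π σ τ : Perm (Fin (n + 1))} (h₁ : Reachable π σ) (h₂ : Reachable σ τ) :
    Reachable π τ :=
  Relation.ReflTransGen.trans h₁ h₂

lemma reachable_top (π : Perm (Fin (n + 1))) : Reachable π (top π) :=
  .single (.inr rfl)

lemma Reachable.inv {π σ : Perm (Fin (n + 1))} (h : Reachable π σ) : Reachable π.symm σ.symm :=
  Relation.ReflTransGen.lift Equiv.symm
    (fun _ _ hstep => by
      rcases hstep with rfl | rfl
      exacts [.inr (top_symm _).symm, .inl (bottom_symm _).symm]) _ _ h

lemma IsIrreducible.top {π : Perm (Fin (n + 1))} (h : IsIrreducible π) : IsIrreducible (top π) := by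
  intro k hk hkn hmaps
  have hpk : k ≤ (π.symm (Fin.last n)).val := by
    by_contra! hp
    have := hmaps (show (π.symm (Fin.last n)).val < k from hp)
    rw [top_apply_of_le le_rfl, apply_symm_apply] at this
    exact absurd this (by simpa using hkn)
  refine h k hk hkn fun i (hi : i.val < k) => ?_
  rw [← top_apply_of_le (Fin.le_def.mpr (by omega))]
  exact hmaps hi

lemma IsIrreducible.bottom {π : Perm (Fin (n + 1))} (h : IsIrreducible π) :
    IsIrreducible (bottom π) := by
  simpa only [top_symm, symm_symm] using h.inv.top.inv

lemma Reachable.isIrreducible {π σ : Perm (Fin (n + 1))} (hσ : Reachable π σ)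
    (hπ : IsIrreducible π) : IsIrreducible σ := by
  induction hσ with
  | refl => exact hπ
  | tail _ hstep ih => rcases hstep with rfl | rfl; exacts [ih.bottom, ih.top]

lemma exists_reachable_top_shift (σ : Perm (Fin (n + 1))) {j : Fin (n + 1)}
    (hj : σ.symm (Fin.last n) < j) :
    ∃ τ, Reachable σ τ ∧ τ (Fin.last n) = σ j ∧ ∀ i ≤ σ.symm (Fin.last n), τ i = σ i := by
  induction j using Fin.reverseInduction generalizing σ with
  | last => exact ⟨σ, .refl, rfl, fun _ _ => rfl⟩
  | cast i ih =>
    obtain ⟨τ, hτ, hlast, hfix⟩ :=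
      ih (top σ) (by rw [top_symm_apply_last]; exact hj.trans Fin.castSucc_lt_succ)
    refine ⟨τ, (reachable_top σ).trans hτ, by rw [hlast, top_apply_succ hj], fun i hi => ?_⟩
    rw [hfix i (by rwa [top_symm_apply_last]), top_apply_of_le hi]

lemma exists_reachable_bottom_shift (σ : Perm (Fin (n + 1))) {t : Fin (n + 1)}
    (ht : σ (Fin.last n) < σ t) :
    ∃ τ, Reachable σ τ ∧ τ t = Fin.last n ∧ ∀ i, σ i ≤ σ (Fin.last n) → τ i = σ i := by
  obtain ⟨τ, hτ, hlast, hfix⟩ := exists_reachable_top_shift σ.symm (j := σ t) (by simpa using ht)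
  refine ⟨τ.symm, hτ.inv, ?_, fun i hi => ?_⟩
  · rw [symm_apply_eq, hlast, symm_apply_apply]
  · rw [symm_apply_eq, hfix (σ i) (by simpa using hi), symm_apply_apply]

def MinimizesLast (σ : Perm (Fin (n + 1))) : Prop :=
  ∀ τ, Reachable σ τ → σ (Fin.last n) ≤ τ (Fin.last n)

namespace MinimizesLast

variable {σ τ : Perm (Fin (n + 1))}

lemma le_apply (hmin : MinimizesLast σ) (hτ : Reachable σ τ) {j : Fin (n + 1)}
    (hj : τ.symm (Fin.last n) < j) : σ (Fin.last n) ≤ τ j := by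
  obtain ⟨τ', hτ', hlast, -⟩ := exists_reachable_top_shift τ hj
  exact hlast ▸ hmin τ' (hτ.trans hτ')

lemma apply_eq (hmin : MinimizesLast σ) (hτ : Reachable σ τ) {j : Fin (n + 1)}
    (hj : σ j < σ (Fin.last n)) : τ j = σ j := by
  induction hτ with
  | refl => rfl
  | tail hστ hstep ih =>
    rcases hstep with rfl | rfl
    · rw [bottom_apply_of_le (by rw [ih]; exact hj.le.trans (hmin _ hστ)), ih]
    · rw [top_apply_of_le, ih]
      by_contra! h
      exact (hmin.le_apply hστ h).not_gt (ih ▸ hj)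

lemma lt_symm_apply_last (hmin : MinimizesLast σ) (hτ : Reachable σ τ) {s : Fin (n + 1)}
    (hs : σ s < σ (Fin.last n)) : s < τ.symm (Fin.last n) := by
  have hfix := hmin.apply_eq hτ hs
  refine lt_of_le_of_ne (not_lt.mp fun h => ?_) fun h => ?_
  · exact (hmin.le_apply hτ h).not_gt (hfix ▸ hs)
  · have hlast : σ s = Fin.last n := by rw [← hfix, h, apply_symm_apply]
    exact (hlast ▸ hs).not_ge (Fin.le_last _)

lemma apply_last_eq_zero (hmin : MinimizesLast σ) (hirr : IsIrreducible σ) :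
    σ (Fin.last n) = 0 := by
  by_contra h0
  refine hirr (σ (Fin.last n)).val (Nat.one_le_iff_ne_zero.mpr fun h => h0 (Fin.ext h))
    (σ (Fin.last n)).isLt (mapsTo_setOf_lt_of_forall_lt fun s t hs ht => ?_)
  rcases eq_or_ne t (Fin.last n) with rfl | hlast
  · exact lt_of_le_of_ne (Fin.le_last s) fun h => (h ▸ hs).false
  · have hgt : σ (Fin.last n) < σ t :=
      lt_of_le_of_ne (Fin.le_def.mpr ht) fun h => hlast (σ.injective h).symm
    obtain ⟨τ, hτ, htτ, -⟩ := exists_reachable_bottom_shift σ hgt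
    have := hmin.lt_symm_apply_last hτ (Fin.lt_def.mpr hs)
    rwa [← htτ, symm_apply_apply] at this

end MinimizesLast

lemma exists_reachable_apply_last_eq_zero {π : Perm (Fin (n + 1))} (hirr : IsIrreducible π) :
    ∃ τ, Reachable π τ ∧ τ (Fin.last n) = 0 := by
  obtain ⟨σ, hσ, hmin⟩ := Set.exists_min_image {τ | Reachable π τ} (fun τ => τ (Fin.last n))
    (Set.toFinite _) ⟨π, .refl⟩
  have hσmin : MinimizesLast σ := fun τ hτ => hmin τ (hσ.trans hτ)
  exact ⟨σ, hσ, hσmin.apply_last_eq_zero (hσ.isIrreducible hirr)⟩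

lemma exists_reachable_standard (hn : 0 < n) {π : Perm (Fin (n + 1))} (hirr : IsIrreducible π) :
    ∃ σ, Reachable π σ ∧ σ 0 = Fin.last n ∧ σ (Fin.last n) = 0 := by
  obtain ⟨τ, hτ, hlast⟩ := exists_reachable_apply_last_eq_zero hirr
  have h0 : τ (Fin.last n) < τ 0 := by
    rw [hlast, Fin.pos_iff_ne_zero]
    intro h
    have := congrArg Fin.val (τ.injective (h.trans hlast.symm))
    simp only [Fin.val_zero, Fin.val_last] at this
    omega
  obtain ⟨σ, hσ, hσ0, hfix⟩ := exists_reachable_bottom_shift τ h0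
  exact ⟨σ, hτ.trans hσ, hσ0, (hfix _ le_rfl).trans hlast⟩

end Rauzy

/-- Every Rauzy class contains a standard permutation: from any irreducible
`π` some finite sequence of Rauzy moves reaches a permutation `σ` with
`σ(1) = d` and `σ(d) = 1` (0-indexed: `σ 0 = d-1`, `σ (d-1) = 0`). -/
theorem rauzy_class_contains_standard (d : ℕ) (hd : 2 ≤ d) (π : Equiv.Perm (Fin d))
    (hirr : ∀ k : ℕ, 1 ≤ k → k < d → ¬ (∀ i : Fin d, i.val < k → (π i).val < k)) :
    ∃ σ : Equiv.Perm (Fin d),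
      Relation.ReflTransGen
        (fun ρ ρ' => RauzyBottomRel d ρ ρ' ∨ RauzyTopRel d ρ ρ') π σ ∧
      σ ⟨0, by omega⟩ = ⟨d - 1, by omega⟩ ∧ σ ⟨d - 1, by omega⟩ = ⟨0, by omega⟩ := by
  obtain ⟨n, rfl⟩ : ∃ n, d = n + 1 := ⟨d - 1, by omega⟩
  obtain ⟨σ, hσ, h0, hlast⟩ := Rauzy.exists_reachable_standard (π := π) (by omega) hirr
  refine ⟨σ, Relation.ReflTransGen.mono (fun _ _ hstep => ?_) _ _ hσ, h0, hlast⟩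
  rcases hstep with rfl | rfl
  exacts [.inl (Rauzy.rauzyBottomRel_bottom _), .inr (Rauzy.rauzyTopRel_top _)]
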